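/- Let ω : V × W → ℝ and ω' : V' × W' → ℝ be continuous bilinear maps of normed spaces, and suppose ω' refines ω via continuous linear maps p : V → V', q : W → W' with dense images satisfying ω'(p(v), q(f)) = ω(v,f) for all v, f. If ω is a left strong duality then so is ω'. -/

import Mathlib

/-!
Approximate an unbounded sequence `x n` in `V'` by `p (v n)` up to a fixed error `ε`. The
sequence `v n` is then unbounded in `V`, so some `ω (v n) f` with `‖f‖ ≤ 1` is as large as we
like; since `ω' (x n) (q f)` differs from it by at most `C ε ‖q‖`, where `C` bounds `ω'`, the
test vectors `q f` witness strong duality of `ω'` on the ball of radius `‖q‖`, and rescaling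
brings the radius back to `1`.
-/

section Bound

variable {V W G : Type*} [NormedAddCommGroup V] [NormedSpace ℝ V]
  [NormedAddCommGroup W] [NormedSpace ℝ W] [NormedAddCommGroup G] [NormedSpace ℝ G]

theorem LinearMap.exists_bound_of_continuous₂ (ω : V →ₗ[ℝ] W →ₗ[ℝ] G)
    (hω : Continuous fun p : V × W => ω p.1 p.2) :
    ∃ C > 0, ∀ v w, ‖ω v w‖ ≤ C * ‖v‖ * ‖w‖ := by
  obtain ⟨δ, hδ, hsmall⟩ :=
    Metric.continuousAt_iff.1 (hω.continuousAt (x := (0 : V × W))) 1 one_pos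
  refine ⟨(2 / δ) ^ 2, by positivity, fun v w => ?_⟩
  rcases eq_or_ne v 0 with rfl | hv
  · simp
  rcases eq_or_ne w 0 with rfl | hw
  · simp
  have hv₀ : 0 < ‖v‖ := norm_pos_iff.2 hv
  have hw₀ : 0 < ‖w‖ := norm_pos_iff.2 hw
  -- rescale `v` and `w` onto the sphere of radius `δ / 2`, where `ω` is bounded by `1`
  set s := δ / 2 / ‖v‖
  set t := δ / 2 / ‖w‖
  have hs : ‖s • v‖ = δ / 2 := by
    rw [norm_smul, Real.norm_of_nonneg (by positivity), div_mul_cancel₀ _ hv₀.ne']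
  have ht : ‖t • w‖ = δ / 2 := by
    rw [norm_smul, Real.norm_of_nonneg (by positivity), div_mul_cancel₀ _ hw₀.ne']
  have hst : t * s * ‖ω v w‖ < 1 := by
    have hdist : dist (s • v, t • w) (0 : V × W) < δ := by
      rw [dist_zero_right, Prod.norm_def, hs, ht, max_self]
      linarith
    have := hsmall hdist
    simp only [Prod.fst_zero, Prod.snd_zero, map_smul, map_zero, LinearMap.smul_apply,
      smul_smul, dist_zero_right, norm_smul] at this
    rwa [Real.norm_of_nonneg (by positivity)] at this
  have hst_inv : (t * s)⁻¹ = (2 / δ) ^ 2 * ‖v‖ * ‖w‖ := by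
    simp only [s, t]
    field_simp
  calc ‖ω v w‖ = (t * s)⁻¹ * (t * s * ‖ω v w‖) := (inv_mul_cancel_left₀ (by positivity) _).symm
    _ ≤ (t * s)⁻¹ * 1 := by gcongr
    _ = (2 / δ) ^ 2 * ‖v‖ * ‖w‖ := by rw [mul_one, hst_inv]

end Bound

section StrongDuality

variable {V W V' W' : Type*} [NormedAddCommGroup V] [NormedSpace ℝ V]
  [NormedAddCommGroup W] [NormedSpace ℝ W] [NormedAddCommGroup V'] [NormedSpace ℝ V']
  [NormedAddCommGroup W'] [NormedSpace ℝ W']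

/-- Left strong duality of `ω` with test vectors taken from the closed ball of radius `R`; by
`IsLeftStrongDuality.of_radius` the choice of a positive radius does not matter. -/
def IsLeftStrongDuality (ω : V →ₗ[ℝ] W →ₗ[ℝ] ℝ) (R : ℝ) : Prop :=
  ∀ x : ℕ → V, (∀ r : ℝ, ∃ n, r < ‖x n‖) → ∀ r : ℝ, ∃ n, ∃ f : W, ‖f‖ ≤ R ∧ r < |ω (x n) f|

theorem IsLeftStrongDuality.mono {ω : V →ₗ[ℝ] W →ₗ[ℝ] ℝ} {R S : ℝ}
    (h : IsLeftStrongDuality ω R) (hRS : R ≤ S) : IsLeftStrongDuality ω S := by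
  intro x hx r
  obtain ⟨n, f, hf, hr⟩ := h x hx r
  exact ⟨n, f, hf.trans hRS, hr⟩

theorem IsLeftStrongDuality.of_radius {ω : V →ₗ[ℝ] W →ₗ[ℝ] ℝ} {R S : ℝ}
    (h : IsLeftStrongDuality ω R) (hR : 0 < R) (hS : 0 < S) : IsLeftStrongDuality ω S := by
  intro x hx r
  obtain ⟨n, f, hf, hr⟩ := h x hx (R / S * r)
  have hc : 0 < S / R := div_pos hS hR
  refine ⟨n, (S / R) • f, ?_, ?_⟩
  · rw [norm_smul, Real.norm_of_nonneg hc.le]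
    calc S / R * ‖f‖ ≤ S / R * R := by gcongr
      _ = S := div_mul_cancel₀ S hR.ne'
  · rw [map_smul, smul_eq_mul, abs_mul, abs_of_pos hc]
    calc r = S / R * (R / S * r) := by field_simp
      _ < S / R * |ω (x n) f| := by gcongr

theorem ContinuousLinearMap.unbounded_of_dist_lt (p : V →L[ℝ] V') {x : ℕ → V'} {v : ℕ → V}
    {ε : ℝ} (hx : ∀ r : ℝ, ∃ n, r < ‖x n‖) (hv : ∀ n, dist (x n) (p (v n)) < ε) :
    ∀ r : ℝ, ∃ n, r < ‖v n‖ := by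
  intro r
  by_contra! hle
  obtain ⟨n, hn⟩ := hx (‖p‖ * r + ε)
  have : ‖x n‖ < ‖p‖ * r + ε :=
    calc ‖x n‖ ≤ ‖p (v n)‖ + dist (x n) (p (v n)) := by
          rw [dist_eq_norm]; exact norm_le_norm_add_norm_sub' _ _
      _ < ‖p‖ * ‖v n‖ + ε := add_lt_add_of_le_of_lt (p.le_opNorm _) (hv n)
      _ ≤ ‖p‖ * r + ε := by gcongr; exact hle n
  linarith

theorem IsLeftStrongDuality.of_denseRange_refinement {ω : V →ₗ[ℝ] W →ₗ[ℝ] ℝ}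
    {ω' : V' →ₗ[ℝ] W' →ₗ[ℝ] ℝ} (hω' : Continuous fun p : V' × W' => ω' p.1 p.2)
    {p : V →L[ℝ] V'} (q : W →L[ℝ] W') (hp : DenseRange p)
    (href : ∀ v f, ω' (p v) (q f) = ω v f) {R : ℝ} (h : IsLeftStrongDuality ω R) :
    IsLeftStrongDuality ω' (‖q‖ * R) := by
  intro x hx r
  obtain ⟨C, hC, hbound⟩ := ω'.exists_bound_of_continuous₂ hω'
  set K := ‖q‖ * |R| + 1
  have hK : 0 < K := by positivity
  set ε := (C * K)⁻¹
  have hε : 0 < ε := by positivity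
  choose v hv using fun n => hp.exists_dist_lt (x n) hε
  obtain ⟨n, f, hf, hr⟩ := h v (p.unbounded_of_dist_lt hx hv) (r + 1)
  have hqf : ‖q f‖ ≤ ‖q‖ * R := (q.le_opNorm f).trans (by gcongr)
  have hqfK : ‖q f‖ ≤ K := by
    have := mul_le_mul_of_nonneg_left (le_abs_self R) (norm_nonneg q)
    linarith
  have herr : |ω' (x n) (q f) - ω (v n) f| ≤ 1 :=
    calc |ω' (x n) (q f) - ω (v n) f| = ‖ω' (x n - p (v n)) (q f)‖ := by
          rw [map_sub, LinearMap.sub_apply, href, Real.norm_eq_abs]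
      _ ≤ C * ε * K := by
          refine (hbound _ _).trans ?_
          rw [← dist_eq_norm]
          gcongr
          exact (hv n).le
      _ = 1 := by simp only [ε]; field_simp
  refine ⟨n, q f, hqf, ?_⟩
  have := abs_sub_abs_le_abs_sub (ω (v n) f) (ω' (x n) (q f))
  rw [abs_sub_comm] at this
  linarith

end StrongDuality

theorem left_strong_duality_of_dense_refinement_general {V W V' W' : Type*}
    [NormedAddCommGroup V] [NormedSpace ℝ V] [NormedAddCommGroup W] [NormedSpace ℝ W]
    [NormedAddCommGroup V'] [NormedSpace ℝ V'] [NormedAddCommGroup W'] [NormedSpace ℝ W']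
    (ω : V →ₗ[ℝ] W →ₗ[ℝ] ℝ) (ω' : V' →ₗ[ℝ] W' →ₗ[ℝ] ℝ)
    (hω' : Continuous fun p : V' × W' => ω' p.1 p.2)
    (p : V →L[ℝ] V') (q : W →L[ℝ] W')
    (hp : DenseRange ⇑p)
    (href : ∀ (v : V) (f : W), ω' (p v) (q f) = ω v f)
    (hleft : ∀ x : ℕ → V, (∀ r : ℝ, ∃ n, r < ‖x n‖) →
      ∀ r : ℝ, ∃ n, ∃ f : W, ‖f‖ ≤ 1 ∧ r < |ω (x n) f|) :
    ∀ x : ℕ → V', (∀ r : ℝ, ∃ n, r < ‖x n‖) →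
      ∀ r : ℝ, ∃ n, ∃ f : W', ‖f‖ ≤ 1 ∧ r < |ω' (x n) f| := by
  have hω₁ : IsLeftStrongDuality ω 1 := hleft
  have hω'q : IsLeftStrongDuality ω' (‖q‖ * 1) := hω₁.of_denseRange_refinement hω' q hp href
  have hq : ‖q‖ * 1 ≤ ‖q‖ + 1 := by linarith
  exact (hω'q.mono hq).of_radius (by positivity) one_pos

/-- If a continuous bilinear map `ω' : V' × W' → ℝ` refines a continuous bilinear map
`ω : V × W → ℝ` via continuous linear maps `p, q` with dense images satisfying
`ω'(p v, q f) = ω(v,f)`, and `ω` is a left strong duality, then so is `ω'`. -/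
theorem left_strong_duality_of_dense_refinement {V W V' W' : Type*}
    [NormedAddCommGroup V] [NormedSpace ℝ V] [NormedAddCommGroup W] [NormedSpace ℝ W]
    [NormedAddCommGroup V'] [NormedSpace ℝ V'] [NormedAddCommGroup W'] [NormedSpace ℝ W']
    (ω : V →ₗ[ℝ] W →ₗ[ℝ] ℝ) (ω' : V' →ₗ[ℝ] W' →ₗ[ℝ] ℝ)
    (hω : Continuous fun p : V × W => ω p.1 p.2)
    (hω' : Continuous fun p : V' × W' => ω' p.1 p.2)
    (p : V →L[ℝ] V') (q : W →L[ℝ] W')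
    (hp : DenseRange ⇑p) (hq : DenseRange ⇑q)
    (href : ∀ (v : V) (f : W), ω' (p v) (q f) = ω v f)
    (hleft : ∀ x : ℕ → V, (∀ r : ℝ, ∃ n, r < ‖x n‖) →
      ∀ r : ℝ, ∃ n, ∃ f : W, ‖f‖ ≤ 1 ∧ r < |ω (x n) f|) :
    ∀ x : ℕ → V', (∀ r : ℝ, ∃ n, r < ‖x n‖) →
      ∀ r : ℝ, ∃ n, ∃ f : W', ‖f‖ ≤ 1 ∧ r < |ω' (x n) f| :=
  left_strong_duality_of_dense_refinement_general ω ω' hω' p q hp href hleft
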